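/- arXiv:1912.02151 — 3 statements merged into one kernel-verified Lean document; each statement's English description precedes it below -/
import Mathlib

section
/- (Knight's identity) For any real numbers y, u, h and τ ∈ (0,1), ρ_τ(y − u − h) − ρ_τ(y − u) = −h·(τ − 1{y ≤ u}) + ∫₀ʰ (1{y ≤ u + z} − 1{y ≤ u}) dz, where for h < 0 the integral ∫₀ʰ is interpreted as −∫ₕ⁰. -/
/-- The quantile loss `ρ_τ(t) = (τ − 1{t ≤ 0})·t`. -/
noncomputable def quantileLoss (τ t : ℝ) : ℝ := (τ - if t ≤ 0 then 1 else 0) * t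

/-!
Write `a = y - u`. Since `ρ_τ(t) = τ t - min t 0`, the identity reduces to
`∫₀ʰ 1{a ≤ z} dz = max h a - max 0 a`, which is the fundamental theorem of calculus for
`z ↦ max z a`: its right derivative at every point `z` is exactly `1{a ≤ z}`.
-/

open Set

lemma quantileLoss_eq_mul_sub_min (τ t : ℝ) : quantileLoss τ t = τ * t - min t 0 := by
  unfold quantileLoss
  split_ifs with ht
  · rw [min_eq_left ht]; ring
  · rw [min_eq_right (not_le.1 ht).le]; ring

lemma hasDerivWithinAt_max_const_Ioi (a z : ℝ) :
    HasDerivWithinAt (fun w => max w a) (if a ≤ z then 1 else 0) (Ioi z) z := by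
  split_ifs with haz
  · exact (hasDerivWithinAt_id z (Ioi z)).congr
      (fun w hw => max_eq_left (haz.trans (le_of_lt hw))) (max_eq_left haz)
  · have hconst : (fun w => max w a) =ᶠ[nhds z] fun _ => a :=
      (eventually_le_nhds (not_le.1 haz)).mono fun w hw => max_eq_right hw
    exact ((hasDerivAt_const z a).congr_of_eventuallyEq hconst).hasDerivWithinAt

lemma monotone_ite_le (a : ℝ) : Monotone fun z : ℝ => if a ≤ z then (1 : ℝ) else 0 :=
  fun _ _ hxy => by
    dsimp only
    split_ifs with hx hy <;> norm_num
    exact hy (hx.trans hxy)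

lemma integral_ite_le (a b c : ℝ) :
    ∫ z in b..c, (if a ≤ z then (1 : ℝ) else 0) = max c a - max b a :=
  intervalIntegral.integral_eq_sub_of_hasDeriv_right
    (continuous_id.max continuous_const).continuousOn
    (fun z _ => hasDerivWithinAt_max_const_Ioi a z) (monotone_ite_le a).intervalIntegrable

theorem knight_identity_general (τ : ℝ) (y u h : ℝ) :
    quantileLoss τ (y - u - h) - quantileLoss τ (y - u) =
      -h * (τ - if y ≤ u then 1 else 0) +
        ∫ z in (0:ℝ)..h,
          ((if y ≤ u + z then (1:ℝ) else 0) - (if y ≤ u then (1:ℝ) else 0)) := by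
  simp only [← sub_le_iff_le_add', ← sub_nonpos (a := y) (b := u)]
  rw [intervalIntegral.integral_sub, integral_ite_le, intervalIntegral.integral_const,
    quantileLoss_eq_mul_sub_min, quantileLoss_eq_mul_sub_min, smul_eq_mul]
  · simp only [max_def, min_def]
    split_ifs <;> linarith
  · exact (monotone_ite_le _).intervalIntegrable
  · exact intervalIntegrable_const

/-- Knight's identity: for any reals `y, u, h` and `τ ∈ (0,1)`,
`ρ_τ(y − u − h) − ρ_τ(y − u) = −h·(τ − 1{y ≤ u}) + ∫₀ʰ (1{y ≤ u + z} − 1{y ≤ u}) dz`,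
where for `h < 0` the integral `∫₀ʰ` is interpreted as `−∫ₕ⁰` (the interval integral
convention). -/
theorem knight_identity (τ : ℝ) (hτ0 : 0 < τ) (hτ1 : τ < 1) (y u h : ℝ) :
    quantileLoss τ (y - u - h) - quantileLoss τ (y - u) =
      -h * (τ - if y ≤ u then 1 else 0) +
        ∫ z in (0:ℝ)..h,
          ((if y ≤ u + z then (1:ℝ) else 0) - (if y ≤ u then (1:ℝ) else 0)) :=
  knight_identity_general τ y u h
end

section
/- For every pair of matrices Π̌, Π̃ ∈ ℝ^{n×T}, one has ‖Π̌ − Π̃‖_* + ‖Π̌‖_* − ‖Π̃‖_* ≤ 6·√(rank Π̌)·‖Π̌ − Π̃‖_F. -/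
open scoped BigOperators

/-- Frobenius norm of a real matrix. -/
noncomputable def frobeniusNorm {n T : ℕ} (A : Matrix (Fin n) (Fin T) ℝ) : ℝ :=
  Real.sqrt (∑ i, ∑ t, (A i t) ^ 2)

/-- Singular values of a real `n × T` matrix, as the square roots of the
eigenvalues of `Aᵀ A` (indexed by `Fin T`). -/
noncomputable def singularValues {n T : ℕ} (A : Matrix (Fin n) (Fin T) ℝ) :
    Fin T → ℝ :=
  fun j => Real.sqrt ((show (Matrix.transpose A * A).IsHermitian by
    simpa using Matrix.isHermitian_conjTranspose_mul_self A).eigenvalues j)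

/-- Nuclear norm: sum of the singular values. -/
noncomputable def nuclearNorm {n T : ℕ} (A : Matrix (Fin n) (Fin T) ℝ) : ℝ :=
  ∑ j, singularValues A j

/-!
The nuclear norm is dual to the operator norm: `trace (Mᴴ * B) ≤ ‖M‖_*` for every contraction `B`,
with equality when `B` is the partial isometry of the polar decomposition of `M`. This gives the
triangle inequality, and also `‖A‖_* + ‖G‖_* ≤ ‖A + G‖_*` when the row and column spaces of `G` are
orthogonal to those of `A`, because the sum of the two polar factors is again a partial isometry.

Let `P`, `Q` be the projections onto the column and row spaces of `Π̌`, put `Δ = Π̌ - Π̃` and split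
`Δ = D + G` with `G = (1 - P) Δ (1 - Q)`. These two facts give
`‖Δ‖_* + ‖Π̌‖_* - ‖Π̃‖_* ≤ 2 ‖D‖_*`. Since `D = P Δ + (1 - P) Δ Q` has rank at most `2 rank Π̌` and
`‖D‖_F ≤ ‖Δ‖_F`, Cauchy–Schwarz on the singular values, `‖D‖_* ≤ √(rank D) ‖D‖_F`, yields the
bound with the constant `2 √2 ≤ 6`.
-/

open Matrix

lemma Real.mul_inv_sqrt_mul_inv_sqrt {x : ℝ} (hx : 0 ≤ x) :
    x * ((√x)⁻¹ * (√x)⁻¹) = if x = 0 then 0 else 1 := by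
  split_ifs with h
  · simp [h]
  · rw [← mul_inv, Real.mul_self_sqrt hx, mul_inv_cancel₀ h]

lemma Matrix.rank_add_le {ι κ K : Type*} [Fintype κ] [Field K] (X Y : Matrix ι κ K) :
    (X + Y).rank ≤ X.rank + Y.rank := by
  have hle : LinearMap.range (X + Y).mulVecLin
      ≤ LinearMap.range X.mulVecLin ⊔ LinearMap.range Y.mulVecLin := by
    rintro v ⟨x, rfl⟩
    rw [Matrix.mulVecLin_add]
    exact Submodule.add_mem_sup (LinearMap.mem_range_self _ x) (LinearMap.mem_range_self _ x)
  exact (Submodule.finrank_mono hle).trans (Submodule.finrank_add_le_finrank_add_finrank _ _)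

namespace NuclearNorm

variable {m n : ℕ}

section GramCalculus

variable (A : Matrix (Fin m) (Fin n) ℝ)

lemma isHermitian_transpose_mul_self : (Aᵀ * A).IsHermitian := by
  simpa using isHermitian_conjTranspose_mul_self A

noncomputable def gramEigenvalues : Fin n → ℝ :=
  (isHermitian_transpose_mul_self A).eigenvalues

noncomputable def gramEigenbasis : Matrix (Fin n) (Fin n) ℝ :=
  (isHermitian_transpose_mul_self A).eigenvectorUnitary

noncomputable def gramCfc (f : ℝ → ℝ) : Matrix (Fin n) (Fin n) ℝ :=
  (isHermitian_transpose_mul_self A).cfc f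

lemma gramCfc_eq (f : ℝ → ℝ) :
    gramCfc A f = gramEigenbasis A * diagonal (f ∘ gramEigenvalues A) * (gramEigenbasis A)ᴴ := by
  rw [gramCfc, IsHermitian.cfc, Unitary.conjStarAlgAut_apply, star_eq_conjTranspose]
  rfl

lemma gramEigenvalues_nonneg (j : Fin n) : 0 ≤ gramEigenvalues A j :=
  eigenvalues_conjTranspose_mul_self_nonneg A j

lemma nuclearNorm_eq_sum_sqrt_gramEigenvalues :
    nuclearNorm A = ∑ j, √(gramEigenvalues A j) := rfl

lemma gramEigenbasis_conjTranspose_mul : (gramEigenbasis A)ᴴ * gramEigenbasis A = 1 := by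
  rw [← star_eq_conjTranspose]
  exact Unitary.coe_star_mul_self _

lemma gramEigenbasis_mul_conjTranspose : gramEigenbasis A * (gramEigenbasis A)ᴴ = 1 := by
  rw [← star_eq_conjTranspose]
  exact Unitary.coe_mul_star_self _

lemma conjTranspose_mul_self_eq_gramCfc_id : Aᴴ * A = gramCfc A id := by
  simpa [gramCfc_eq, gramEigenbasis, gramEigenvalues, star_eq_conjTranspose,
    RCLike.ofReal_real_eq_id] using (isHermitian_transpose_mul_self A).spectral_theorem

lemma gramEigenbasis_conj_gram :
    (gramEigenbasis A)ᴴ * (Aᴴ * A) * gramEigenbasis A = diagonal (gramEigenvalues A) := by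
  rw [conjTranspose_mul_self_eq_gramCfc_id, gramCfc_eq]
  simp only [Matrix.mul_assoc, gramEigenbasis_conjTranspose_mul, Matrix.mul_one]
  rw [← Matrix.mul_assoc, gramEigenbasis_conjTranspose_mul, Matrix.one_mul]
  rfl

lemma gramCfc_mul (f g : ℝ → ℝ) :
    gramCfc A f * gramCfc A g = gramCfc A (fun x => f x * g x) := by
  simp only [gramCfc_eq, Matrix.mul_assoc]
  rw [← Matrix.mul_assoc (gramEigenbasis A)ᴴ, gramEigenbasis_conjTranspose_mul, Matrix.one_mul,
    ← Matrix.mul_assoc (diagonal _), diagonal_mul_diagonal]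
  rfl

lemma gramCfc_sub (f g : ℝ → ℝ) : gramCfc A f - gramCfc A g = gramCfc A (f - g) := by
  rw [gramCfc_eq, gramCfc_eq, ← Matrix.sub_mul, ← Matrix.mul_sub, diagonal_sub]
  rfl

lemma gramCfc_one : gramCfc A 1 = 1 := by
  rw [gramCfc_eq, show (1 : ℝ → ℝ) ∘ gramEigenvalues A = 1 from rfl, diagonal_one',
    Matrix.mul_one, gramEigenbasis_mul_conjTranspose]

lemma gramCfc_zero : gramCfc A 0 = 0 := by
  simp [gramCfc_eq, show (0 : ℝ → ℝ) ∘ gramEigenvalues A = 0 from rfl]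

lemma gramCfc_congr {f g : ℝ → ℝ} (h : ∀ x, 0 ≤ x → f x = g x) : gramCfc A f = gramCfc A g := by
  have hfg : f ∘ gramEigenvalues A = g ∘ gramEigenvalues A :=
    funext fun j => h _ (gramEigenvalues_nonneg A j)
  rw [gramCfc_eq, gramCfc_eq, hfg]

lemma conjTranspose_gramCfc (f : ℝ → ℝ) : (gramCfc A f)ᴴ = gramCfc A f := by
  simp [gramCfc_eq, Matrix.mul_assoc]

lemma trace_gramCfc (f : ℝ → ℝ) : trace (gramCfc A f) = ∑ j, f (gramEigenvalues A j) := by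
  rw [gramCfc_eq, trace_mul_comm, ← Matrix.mul_assoc, gramEigenbasis_conjTranspose_mul,
    Matrix.one_mul, trace_diagonal]
  rfl

lemma card_gramEigenvalues_ne_zero : Fintype.card {j // gramEigenvalues A j ≠ 0} = A.rank := by
  rw [← rank_transpose_mul_self]
  exact ((isHermitian_transpose_mul_self A).rank_eq_card_non_zero_eigs).symm

lemma rank_gramCfc_le {f : ℝ → ℝ} (hf : f 0 = 0) : (gramCfc A f).rank ≤ A.rank := by
  calc (gramCfc A f).rank ≤ (diagonal (f ∘ gramEigenvalues A)).rank := by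
        rw [gramCfc_eq]
        exact (rank_mul_le_left _ _).trans (rank_mul_le_right _ _)
    _ = Fintype.card {j // f (gramEigenvalues A j) ≠ 0} := rank_diagonal _
    _ ≤ Fintype.card {j // gramEigenvalues A j ≠ 0} :=
        Fintype.card_subtype_mono _ _ fun j hj h0 => hj (by rw [h0, hf])
    _ = A.rank := card_gramEigenvalues_ne_zero A

lemma conjTranspose_mul_self_mul_gramCfc (f : ℝ → ℝ) :
    Aᴴ * A * gramCfc A f = gramCfc A (fun x => x * f x) := by
  rw [conjTranspose_mul_self_eq_gramCfc_id, gramCfc_mul]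
  rfl

end GramCalculus

section PolarDecomposition

variable (A : Matrix (Fin m) (Fin n) ℝ)

noncomputable def rowSpaceProj : Matrix (Fin n) (Fin n) ℝ :=
  gramCfc A fun x => if x = 0 then 0 else 1

/-- The partial isometry `U` of the polar decomposition `A = U * √(Aᴴ * A)`: as `(√0)⁻¹ = 0`,
the right factor is the pseudo-inverse of `√(Aᴴ * A)`. -/
noncomputable def polarFactor : Matrix (Fin m) (Fin n) ℝ :=
  A * gramCfc A fun x => (√x)⁻¹

lemma isStarProjection_rowSpaceProj : IsStarProjection (rowSpaceProj A) where
  isIdempotentElem := by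
    rw [IsIdempotentElem, rowSpaceProj, gramCfc_mul]
    exact gramCfc_congr A fun x _ => by split_ifs <;> simp
  isSelfAdjoint := conjTranspose_gramCfc A _

lemma rowSpaceProj_eq_conjTranspose_mul :
    rowSpaceProj A = Aᴴ * (A * gramCfc A fun x => (√x)⁻¹ * (√x)⁻¹) := by
  rw [← Matrix.mul_assoc, conjTranspose_mul_self_mul_gramCfc]
  exact gramCfc_congr A fun x hx => (Real.mul_inv_sqrt_mul_inv_sqrt hx).symm

lemma mul_rowSpaceProj_eq_zero {l : ℕ} {C : Matrix (Fin l) (Fin n) ℝ} (h : C * Aᴴ = 0) :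
    C * rowSpaceProj A = 0 := by
  rw [rowSpaceProj_eq_conjTranspose_mul, ← Matrix.mul_assoc, h, Matrix.zero_mul]

lemma rowSpaceProj_mul_rowSpaceProj_eq_zero {C : Matrix (Fin m) (Fin n) ℝ} (h : C * Aᴴ = 0) :
    rowSpaceProj A * rowSpaceProj C = 0 := by
  have hQC : rowSpaceProj A * Cᴴ = 0 := by
    rw [← (isStarProjection_rowSpaceProj A).isSelfAdjoint.star_eq, star_eq_conjTranspose,
      ← conjTranspose_mul, mul_rowSpaceProj_eq_zero A h, conjTranspose_zero]
  rw [rowSpaceProj_eq_conjTranspose_mul C, ← Matrix.mul_assoc, hQC, Matrix.zero_mul]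

lemma mul_rowSpaceProj : A * rowSpaceProj A = A := by
  have hker : A * (1 - rowSpaceProj A) = 0 := by
    rw [← conjTranspose_mul_self_eq_zero, conjTranspose_mul, Matrix.mul_assoc,
      ← Matrix.mul_assoc Aᴴ, ← gramCfc_one A, rowSpaceProj, gramCfc_sub, conjTranspose_gramCfc,
      conjTranspose_mul_self_mul_gramCfc, gramCfc_mul, ← gramCfc_zero A]
    exact gramCfc_congr A fun x _ => by by_cases hx : x = 0 <;> simp [hx]
  rwa [Matrix.mul_sub, Matrix.mul_one, sub_eq_zero, eq_comm] at hker

lemma rowSpaceProj_mul_conjTranspose : rowSpaceProj A * Aᴴ = Aᴴ := by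
  have h := congrArg conjTranspose (mul_rowSpaceProj A)
  rwa [conjTranspose_mul, rowSpaceProj, conjTranspose_gramCfc] at h

lemma rank_rowSpaceProj_le : (rowSpaceProj A).rank ≤ A.rank :=
  rank_gramCfc_le A (by simp)

lemma conjTranspose_polarFactor_mul_polarFactor :
    (polarFactor A)ᴴ * polarFactor A = rowSpaceProj A := by
  rw [polarFactor, conjTranspose_mul, conjTranspose_gramCfc, Matrix.mul_assoc,
    ← Matrix.mul_assoc Aᴴ, conjTranspose_mul_self_mul_gramCfc, gramCfc_mul]
  exact gramCfc_congr A fun x hx => by rw [← Real.mul_inv_sqrt_mul_inv_sqrt hx]; ring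

lemma trace_conjTranspose_mul_polarFactor : trace (Aᴴ * polarFactor A) = nuclearNorm A := by
  rw [polarFactor, ← Matrix.mul_assoc, conjTranspose_mul_self_mul_gramCfc, trace_gramCfc]
  exact Finset.sum_congr rfl fun j _ => Real.div_sqrt

lemma conjTranspose_mul_polarFactor_eq_zero {C : Matrix (Fin m) (Fin n) ℝ} (h : Cᴴ * A = 0) :
    Cᴴ * polarFactor A = 0 := by
  rw [polarFactor, ← Matrix.mul_assoc, h, Matrix.zero_mul]

lemma conjTranspose_polarFactor_mul_polarFactor_eq_zero {C : Matrix (Fin m) (Fin n) ℝ}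
    (h : Aᴴ * C = 0) : (polarFactor A)ᴴ * polarFactor C = 0 := by
  rw [polarFactor, conjTranspose_mul, Matrix.mul_assoc, conjTranspose_mul_polarFactor_eq_zero C h,
    Matrix.mul_zero]

end PolarDecomposition

section Contraction

variable {ι κ : Type*} [Fintype ι]

/-- `‖B x‖ ≤ ‖x‖` for all `x`, i.e. `B` has operator norm at most `1`. -/
def IsContraction [DecidableEq κ] (B : Matrix ι κ ℝ) : Prop :=
  (1 - Bᴴ * B).PosSemidef

lemma isContraction_of_isStarProjection [Fintype κ] [DecidableEq κ] {B : Matrix ι κ ℝ}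
    (hB : IsStarProjection (Bᴴ * B)) : IsContraction B := by
  have hR := hB.one_sub
  rw [IsContraction, ← hR.isIdempotentElem.eq]
  nth_rw 1 [← hR.isSelfAdjoint.star_eq]
  exact posSemidef_conjTranspose_mul_self _

lemma IsContraction.diag_conjTranspose_mul_self_le_one [DecidableEq κ] {B : Matrix ι κ ℝ}
    (hB : IsContraction B) (j : κ) : (Bᴴ * B) j j ≤ 1 := by
  simpa using hB.diag_nonneg (i := j)

lemma IsContraction.mul_unitary [Fintype κ] [DecidableEq κ] {B : Matrix ι κ ℝ}
    (hB : IsContraction B) {V : Matrix κ κ ℝ} (hV : Vᴴ * V = 1) : IsContraction (B * V) := by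
  rw [IsContraction]
  convert hB.conjTranspose_mul_mul_same V using 1
  simp only [conjTranspose_mul, Matrix.mul_sub, Matrix.sub_mul, Matrix.mul_one, hV,
    Matrix.mul_assoc]

lemma trace_conjTranspose_mul_le [Fintype κ] (X Y : Matrix ι κ ℝ) :
    trace (Xᴴ * Y) ≤ ∑ j, √((Xᴴ * X) j j) * √((Yᴴ * Y) j j) := by
  simp only [trace, diag, mul_apply, conjTranspose_apply, star_trivial, ← sq]
  exact Finset.sum_le_sum fun j _ => Real.sum_mul_le_sqrt_mul_sqrt _ _ _

end Contraction

section NuclearNormInequalities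

variable (A : Matrix (Fin m) (Fin n) ℝ)

lemma trace_conjTranspose_mul_le_nuclearNorm {B : Matrix (Fin m) (Fin n) ℝ}
    (hB : IsContraction B) : trace (Aᴴ * B) ≤ nuclearNorm A := by
  set V := gramEigenbasis A
  have hMV : (A * V)ᴴ * (A * V) = diagonal (gramEigenvalues A) := by
    rw [conjTranspose_mul, Matrix.mul_assoc, ← Matrix.mul_assoc Aᴴ, ← Matrix.mul_assoc,
      gramEigenbasis_conj_gram]
  have hBV := hB.mul_unitary (gramEigenbasis_conjTranspose_mul A)
  calc trace (Aᴴ * B) = trace ((A * V)ᴴ * (B * V)) := by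
        rw [show (A * V)ᴴ * (B * V) = Vᴴ * (Aᴴ * B) * V by
              simp only [conjTranspose_mul, Matrix.mul_assoc],
          trace_mul_comm (Vᴴ * (Aᴴ * B)) V, ← Matrix.mul_assoc, gramEigenbasis_mul_conjTranspose,
          Matrix.one_mul]
    _ ≤ ∑ j, √(((A * V)ᴴ * (A * V)) j j) * √(((B * V)ᴴ * (B * V)) j j) :=
        trace_conjTranspose_mul_le _ _
    _ ≤ ∑ j, √(gramEigenvalues A j) * 1 := by
        rw [hMV]
        refine Finset.sum_le_sum fun j _ => ?_
        rw [diagonal_apply_eq]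
        exact mul_le_mul_of_nonneg_left
          (Real.sqrt_le_one.mpr (hBV.diag_conjTranspose_mul_self_le_one j)) (Real.sqrt_nonneg _)
    _ = nuclearNorm A := by simp [nuclearNorm_eq_sum_sqrt_gramEigenvalues]

lemma nuclearNorm_add_le (A' : Matrix (Fin m) (Fin n) ℝ) :
    nuclearNorm (A + A') ≤ nuclearNorm A + nuclearNorm A' := by
  have hW : IsContraction (polarFactor (A + A')) := by
    apply isContraction_of_isStarProjection
    rw [conjTranspose_polarFactor_mul_polarFactor]
    exact isStarProjection_rowSpaceProj _
  rw [← trace_conjTranspose_mul_polarFactor, conjTranspose_add, Matrix.add_mul, trace_add]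
  exact add_le_add (trace_conjTranspose_mul_le_nuclearNorm A hW)
    (trace_conjTranspose_mul_le_nuclearNorm A' hW)

lemma nuclearNorm_neg : nuclearNorm (-A) = nuclearNorm A := by
  simp [nuclearNorm, singularValues]

lemma nuclearNorm_add_nuclearNorm_le {C : Matrix (Fin m) (Fin n) ℝ} (h₁ : Aᴴ * C = 0)
    (h₂ : C * Aᴴ = 0) : nuclearNorm A + nuclearNorm C ≤ nuclearNorm (A + C) := by
  have h₁' : Cᴴ * A = 0 := by simpa using congrArg conjTranspose h₁
  have hWAC := conjTranspose_polarFactor_mul_polarFactor_eq_zero A h₁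
  have hWCA := conjTranspose_polarFactor_mul_polarFactor_eq_zero C h₁'
  have hB : IsContraction (polarFactor A + polarFactor C) := by
    apply isContraction_of_isStarProjection
    simp only [conjTranspose_add, Matrix.add_mul, Matrix.mul_add, hWAC, hWCA, add_zero, zero_add,
      conjTranspose_polarFactor_mul_polarFactor]
    exact (isStarProjection_rowSpaceProj A).add (isStarProjection_rowSpaceProj C)
      (rowSpaceProj_mul_rowSpaceProj_eq_zero A h₂)
  calc nuclearNorm A + nuclearNorm C = trace ((A + C)ᴴ * (polarFactor A + polarFactor C)) := by
        simp only [conjTranspose_add, Matrix.add_mul, Matrix.mul_add, trace_add,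
          conjTranspose_mul_polarFactor_eq_zero C h₁, conjTranspose_mul_polarFactor_eq_zero A h₁',
          trace_conjTranspose_mul_polarFactor, add_zero, zero_add]
    _ ≤ nuclearNorm (A + C) := trace_conjTranspose_mul_le_nuclearNorm _ hB

lemma frobeniusNorm_eq_sqrt_trace : frobeniusNorm A = √(trace (Aᴴ * A)) := by
  rw [frobeniusNorm, trace, Finset.sum_comm]
  simp [mul_apply, sq]

lemma nuclearNorm_le_sqrt_rank_mul_frobeniusNorm :
    nuclearNorm A ≤ √A.rank * frobeniusNorm A := by
  set ev := gramEigenvalues A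
  have hsupp : ∀ j, √(ev j) = (if ev j = 0 then 0 else 1) * √(ev j) := fun j => by
    split_ifs with h <;> simp [h]
  have hcard : ∑ j, (if ev j = 0 then 0 else 1 : ℝ) ^ 2 = A.rank := by
    simp [ev, Finset.sum_ite, ← card_gramEigenvalues_ne_zero, Fintype.card_subtype]
  have hsq : ∑ j, √(ev j) ^ 2 = trace (Aᴴ * A) := by
    rw [conjTranspose_mul_self_eq_gramCfc_id, trace_gramCfc]
    exact Finset.sum_congr rfl fun j _ => Real.sq_sqrt (gramEigenvalues_nonneg A j)
  calc nuclearNorm A = ∑ j, (if ev j = 0 then 0 else 1) * √(ev j) :=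
        Finset.sum_congr rfl fun j _ => hsupp j
    _ ≤ √(∑ j, (if ev j = 0 then 0 else 1 : ℝ) ^ 2) * √(∑ j, √(ev j) ^ 2) :=
        Real.sum_mul_le_sqrt_mul_sqrt _ _ _
    _ = √A.rank * frobeniusNorm A := by rw [hcard, hsq, frobeniusNorm_eq_sqrt_trace]

lemma nuclearNorm_add_nuclearNorm_sub_le {X G : Matrix (Fin m) (Fin n) ℝ} (h₁ : Aᴴ * G = 0)
    (h₂ : G * Aᴴ = 0) :
    nuclearNorm X + nuclearNorm A - nuclearNorm (A - X) ≤ 2 * nuclearNorm (X - G) := by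
  have hsup : nuclearNorm A + nuclearNorm G ≤ nuclearNorm (A - G) := by
    rw [← nuclearNorm_neg G, sub_eq_add_neg]
    exact nuclearNorm_add_nuclearNorm_le A (by rw [Matrix.mul_neg, h₁, neg_zero])
      (by rw [Matrix.neg_mul, h₂, neg_zero])
  have hAG : nuclearNorm (A - G) ≤ nuclearNorm (A - X) + nuclearNorm (X - G) := by
    simpa using nuclearNorm_add_le (A - X) (X - G)
  have hX : nuclearNorm X ≤ nuclearNorm (X - G) + nuclearNorm G := by
    simpa using nuclearNorm_add_le (X - G) G
  linarith

end NuclearNormInequalities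

section Compression

variable {ι κ : Type*} [Fintype ι] [Fintype κ] [DecidableEq ι] [DecidableEq κ]

lemma rank_sub_compress_le {K : Type*} [Field K] (P : Matrix ι ι K) (Q : Matrix κ κ K)
    (X : Matrix ι κ K) : (X - (1 - P) * X * (1 - Q)).rank ≤ P.rank + Q.rank := by
  have hsplit : X - (1 - P) * X * (1 - Q) = P * X + (1 - P) * (X * Q) := by
    simp only [Matrix.sub_mul, Matrix.mul_sub, Matrix.one_mul, Matrix.mul_one, Matrix.mul_assoc]
    abel
  rw [hsplit]
  exact (Matrix.rank_add_le _ _).trans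
    (add_le_add (rank_mul_le_left _ _) ((rank_mul_le_right _ _).trans (rank_mul_le_right _ _)))

lemma trace_sub_compress_le {P : Matrix ι ι ℝ} {Q : Matrix κ κ ℝ} (hP : IsStarProjection P)
    (hQ : IsStarProjection Q) (X : Matrix ι κ ℝ) :
    trace ((X - (1 - P) * X * (1 - Q))ᴴ * (X - (1 - P) * X * (1 - Q))) ≤ trace (Xᴴ * X) := by
  set G := (1 - P) * X * (1 - Q)
  set D := X - G
  have hP' := hP.one_sub
  have hQ' := hQ.one_sub
  have hGh : Gᴴ = (1 - Q) * Xᴴ * (1 - P) := by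
    rw [conjTranspose_mul, conjTranspose_mul, ← star_eq_conjTranspose, ← star_eq_conjTranspose,
      hP'.isSelfAdjoint.star_eq, hQ'.isSelfAdjoint.star_eq, Matrix.mul_assoc]
  have hcompress : (1 - P) * D * (1 - Q) = 0 := by
    have hGG : (1 - P) * G * (1 - Q) = (1 - P) * (1 - P) * X * ((1 - Q) * (1 - Q)) := by
      simp only [G, Matrix.mul_assoc]
    rw [show D = X - G from rfl, Matrix.mul_sub (1 - P) X G, Matrix.sub_mul _ _ (1 - Q), hGG,
      hP'.isIdempotentElem.eq, hQ'.isIdempotentElem.eq,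
      sub_self]
  have hGD : trace (Gᴴ * D) = 0 := by
    rw [hGh, Matrix.mul_assoc, Matrix.mul_assoc, trace_mul_comm, Matrix.mul_assoc, hcompress,
      Matrix.mul_zero, trace_zero]
  have hDG : trace (Dᴴ * G) = 0 := by
    rw [← conjTranspose_conjTranspose G, ← conjTranspose_mul, trace_conjTranspose, hGD, star_zero]
  have hX : X = D + G := by simp [D]
  calc trace (Dᴴ * D) ≤ trace (Dᴴ * D) + trace (Gᴴ * G) :=
        le_add_of_nonneg_right (posSemidef_conjTranspose_mul_self G).trace_nonneg
    _ = trace (Xᴴ * X) := by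
        rw [hX, conjTranspose_add, Matrix.add_mul, Matrix.mul_add, Matrix.mul_add, trace_add,
          trace_add, trace_add, hGD, hDG]
        ring

end Compression

section CompressionByProjections

variable (A : Matrix (Fin m) (Fin n) ℝ) (X : Matrix (Fin m) (Fin n) ℝ)

lemma conjTranspose_mul_compress_eq_zero :
    Aᴴ * ((1 - rowSpaceProj Aᴴ) * X * (1 - rowSpaceProj A)) = 0 := by
  have hA : Aᴴ * (1 - rowSpaceProj Aᴴ) = 0 := by
    rw [Matrix.mul_sub, Matrix.mul_one, mul_rowSpaceProj, sub_self]
  rw [← Matrix.mul_assoc, ← Matrix.mul_assoc, hA, Matrix.zero_mul, Matrix.zero_mul]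

lemma compress_mul_conjTranspose_eq_zero :
    (1 - rowSpaceProj Aᴴ) * X * (1 - rowSpaceProj A) * Aᴴ = 0 := by
  have hA : (1 - rowSpaceProj A) * Aᴴ = 0 := by
    rw [Matrix.sub_mul, Matrix.one_mul, rowSpaceProj_mul_conjTranspose, sub_self]
  rw [Matrix.mul_assoc, hA, Matrix.mul_zero]

end CompressionByProjections

end NuclearNorm

open NuclearNorm

/-- for any `Π̌, Π̃ ∈ ℝ^{n×T}`,
`‖Π̌ − Π̃‖_* + ‖Π̌‖_* − ‖Π̃‖_* ≤ 6·√(rank Π̌)·‖Π̌ − Π̃‖_F`. -/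
theorem nuclearNorm_difference_bound {n T : ℕ}
    (Pc Pt : Matrix (Fin n) (Fin T) ℝ) :
    nuclearNorm (Pc - Pt) + nuclearNorm Pc - nuclearNorm Pt ≤
      6 * Real.sqrt (Pc.rank) * frobeniusNorm (Pc - Pt) := by
  set P := rowSpaceProj Pcᴴ
  set Q := rowSpaceProj Pc
  set D := Pc - Pt - (1 - P) * (Pc - Pt) * (1 - Q)
  have hsplit : nuclearNorm (Pc - Pt) + nuclearNorm Pc - nuclearNorm Pt ≤ 2 * nuclearNorm D := by
    have h := nuclearNorm_add_nuclearNorm_sub_le Pc (X := Pc - Pt)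
      (conjTranspose_mul_compress_eq_zero Pc (Pc - Pt))
      (compress_mul_conjTranspose_eq_zero Pc (Pc - Pt))
    rwa [sub_sub_cancel] at h
  have hrank : (D.rank : ℝ) ≤ 2 * Pc.rank := by
    have hD : D.rank ≤ P.rank + Q.rank := rank_sub_compress_le _ _ _
    have hP : P.rank ≤ Pc.rank := (rank_rowSpaceProj_le Pcᴴ).trans_eq (rank_conjTranspose Pc)
    have hQ : Q.rank ≤ Pc.rank := rank_rowSpaceProj_le Pc
    exact_mod_cast (by omega)
  have hfrob : frobeniusNorm D ≤ frobeniusNorm (Pc - Pt) := by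
    rw [frobeniusNorm_eq_sqrt_trace, frobeniusNorm_eq_sqrt_trace]
    exact Real.sqrt_le_sqrt (trace_sub_compress_le (isStarProjection_rowSpaceProj _)
      (isStarProjection_rowSpaceProj _) _)
  have hsqrt2 : 2 * √2 ≤ 6 := by nlinarith [Real.sq_sqrt zero_le_two, Real.sqrt_nonneg 2]
  have hD₀ : 0 ≤ frobeniusNorm D := Real.sqrt_nonneg _
  have hΔ₀ : 0 ≤ frobeniusNorm (Pc - Pt) := Real.sqrt_nonneg _
  calc _ ≤ 2 * nuclearNorm D := hsplit
    _ ≤ 2 * (√D.rank * frobeniusNorm D) := by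
        gcongr; exact nuclearNorm_le_sqrt_rank_mul_frobeniusNorm D
    _ ≤ 2 * (√(2 * Pc.rank) * frobeniusNorm (Pc - Pt)) := by gcongr
    _ = 2 * √2 * √Pc.rank * frobeniusNorm (Pc - Pt) := by rw [Real.sqrt_mul zero_le_two]; ring
    _ ≤ 6 * √Pc.rank * frobeniusNorm (Pc - Pt) := by gcongr
end

section
/- Let δ ∈ ℝᵖ, let T ⊆ {1,…,p}, and for m ≥ 1 let T̄(δ,m) ⊆ Tᶜ be the set of indices of the m largest coordinates of |δ| among indices outside T (with T̄(δ,m) = Tᶜ if |Tᶜ| ≤ m). Then ‖δ_{(T ∪ T̄(δ,m))ᶜ}‖₂² ≤ ‖δ_{Tᶜ}‖₁² / m. -/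
/-!
Every index outside `T ∪ S` is dominated by each of the `m` indices of `S`, so its
coordinate is at most the average `‖δ_S‖₁ / m ≤ ‖δ_{Tᶜ}‖₁ / m`. Bounding one factor of each
square by this average gives `‖δ_{(T ∪ S)ᶜ}‖₂² ≤ (‖δ_{Tᶜ}‖₁ / m) · ‖δ_{Tᶜ}‖₁`.
-/

open Finset

section

variable {ι K : Type*} [Field K] [LinearOrder K] [IsStrictOrderedRing K]

theorem le_sum_div_card_of_forall_le {s : Finset ι} {g : ι → K} {a : K} (hs : s.Nonempty)
    (h : ∀ i ∈ s, a ≤ g i) : a ≤ (∑ i ∈ s, g i) / #s := by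
  rw [le_div_iff₀ (by simpa using hs.card_pos), mul_comm, ← nsmul_eq_mul]
  exact card_nsmul_le_sum s g a h

theorem sum_sq_le_mul_sum_abs {s : Finset ι} {f : ι → K} {c : K} (h : ∀ i ∈ s, |f i| ≤ c) :
    ∑ i ∈ s, f i ^ 2 ≤ c * ∑ i ∈ s, |f i| := by
  rw [mul_sum]
  refine sum_le_sum fun i hi => ?_
  rw [← sq_abs, sq]
  exact mul_le_mul_of_nonneg_right (h i hi) (abs_nonneg _)

theorem sum_sq_sdiff_le_sq_sum_abs_div_card [DecidableEq ι] (f : ι → K) {U S : Finset ι}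
    (hSU : S ⊆ U) (hS : S.Nonempty) (hlargest : ∀ i ∈ S, ∀ j ∈ U \ S, |f j| ≤ |f i|) :
    ∑ i ∈ U \ S, f i ^ 2 ≤ (∑ i ∈ U, |f i|) ^ 2 / #S := by
  set L := ∑ i ∈ U, |f i|
  have sum_le_L : ∀ R ⊆ U, ∑ i ∈ R, |f i| ≤ L := fun R hR =>
    sum_le_sum_of_subset_of_nonneg hR fun i _ _ => abs_nonneg _
  have tail_le_avg : ∀ j ∈ U \ S, |f j| ≤ L / #S := fun j hj =>
    (le_sum_div_card_of_forall_le hS fun i hi => hlargest i hi j hj).trans <|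
      div_le_div_of_nonneg_right (sum_le_L S hSU) (Nat.cast_nonneg _)
  calc ∑ i ∈ U \ S, f i ^ 2 ≤ L / #S * ∑ i ∈ U \ S, |f i| := sum_sq_le_mul_sum_abs tail_le_avg
    _ ≤ L / #S * L := by
      gcongr
      exact sum_le_L _ sdiff_subset
    _ = L ^ 2 / #S := by ring

end

/-- let `δ ∈ ℝᵖ`, `T ⊆ {1,…,p}`, `m ≥ 1`, and let `S ⊆ Tᶜ` be a set
of indices of the `m` largest coordinates of `|δ|` outside `T` (i.e.
`S.card = min m |Tᶜ|` and every coordinate of `|δ|` in `S` dominates every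
coordinate of `|δ|` in `Tᶜ \ S`).  Then
`‖δ_{(T ∪ S)ᶜ}‖₂² ≤ ‖δ_{Tᶜ}‖₁² / m`. -/
theorem sparse_tail_bound {p : ℕ} (δ : Fin p → ℝ) (T : Finset (Fin p))
    (m : ℕ) (hm : 1 ≤ m) (S : Finset (Fin p)) (hST : S ⊆ Tᶜ)
    (hcard : S.card = min m Tᶜ.card)
    (hlargest : ∀ i ∈ S, ∀ j ∈ Tᶜ \ S, |δ j| ≤ |δ i|) :
    ∑ i ∈ (T ∪ S)ᶜ, (δ i) ^ 2 ≤ (∑ i ∈ Tᶜ, |δ i|) ^ 2 / m := by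
  rw [compl_union, ← sdiff_eq_inter_compl]
  rcases le_or_gt Tᶜ.card m with hTm | hmT
  · have hS : S = Tᶜ := eq_of_subset_of_card_le hST (by rw [hcard, min_eq_right hTm])
    rw [hS, Finset.sdiff_self, sum_empty]
    positivity
  · have hSm : #S = m := by rw [hcard, min_eq_left hmT.le]
    have hS : S.Nonempty := card_pos.mp (by omega)
    simpa only [hSm] using sum_sq_sdiff_le_sq_sum_abs_div_card δ hST hS hlargest
end
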